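/- arXiv:2402.08396 — 11 statements merged into one kernel-verified Lean document; each statement's English description precedes it below -/
import Mathlib

section
/- Let x : Fin n → ℝ with each x_i > 0 and x_1 ≥ x_2 ≥ ... ≥ x_n, let X = ∑ x_i, and let E > 0. Then the Herfindahl-Hirschman index after giving the entire prize E to the top club weakly increases: ((x_1+E)^2 + ∑_{i≥2} x_i^2)/(X+E)^2 ≥ (∑ x_i^2)/X^2. -/
open Finset

/-- Proposition 1: giving the entire prize `E` to the top club weakly increases the HHI. -/
theorem top_prize_hurts_balance (n : ℕ) (hn : 0 < n) (x : Fin n → ℝ)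
    (hpos : ∀ i, 0 < x i) (hmono : Antitone x) (E : ℝ) (hE : 0 < E) :
    ((x ⟨0, hn⟩ + E) ^ 2 + ∑ i ∈ univ.filter (fun i : Fin n => (i : ℕ) ≠ 0), x i ^ 2) /
        ((∑ i, x i) + E) ^ 2 ≥ (∑ i, x i ^ 2) / (∑ i, x i) ^ 2 := by
  set a := x ⟨0, hn⟩ with ha
  set X := ∑ i, x i with hX
  set S := ∑ i, x i ^ 2 with hS
  have hXpos : 0 < X := Finset.sum_pos (fun i _ => hpos i) (by simp [Finset.univ_nonempty_iff, Fin.pos_iff_nonempty.mp hn])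
  have hle : ∀ i, x i ≤ a := fun i => hmono (by simp [Fin.le_def])
  have haX : a ≤ X := Finset.single_le_sum (fun i _ => (hpos i).le) (Finset.mem_univ _)
  have hSaX : S ≤ a * X := by
    rw [hS, hX, Finset.mul_sum]
    exact Finset.sum_le_sum fun i _ => by nlinarith [hpos i, hle i]
  have hsplit : S = a ^ 2 + ∑ i ∈ univ.filter (fun i : Fin n => (i : ℕ) ≠ 0), x i ^ 2 := by
    rw [hS]
    have : (univ.filter (fun i : Fin n => (i : ℕ) ≠ 0)) = univ.erase ⟨0, hn⟩ := by
      ext i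
      simp [Fin.ext_iff]
    rw [this, ← Finset.add_sum_erase _ _ (Finset.mem_univ ⟨0, hn⟩)]
  have hT : ∑ i ∈ univ.filter (fun i : Fin n => (i : ℕ) ≠ 0), x i ^ 2 = S - a ^ 2 := by
    linarith
  rw [ge_iff_le, div_le_div_iff₀ (by positivity) (by positivity), hT]
  nlinarith [mul_le_mul_of_nonneg_right hSaX (by positivity : (0:ℝ) ≤ 2 * X * E),
    mul_le_mul_of_nonneg_right hSaX (by positivity : (0:ℝ) ≤ E ^ 2),
    mul_le_mul_of_nonneg_right haX (by positivity : (0:ℝ) ≤ X * E ^ 2),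
    mul_le_mul_of_nonneg_right haX (by positivity : (0:ℝ) ≤ 2 * X ^ 2 * E)]
end

section
/- Let x : Fin n → ℝ with each x_i > 0, X = ∑ x_i, and E > 0. Then distributing the prize equally, i.e., adding E/n to each budget, weakly decreases the HHI: (∑ (x_i + E/n)^2)/(X+E)^2 ≤ (∑ x_i^2)/X^2. -/
open Finset

/-- Proposition 2: equal sharing of the prize `E` among all `n` clubs weakly decreases the HHI. -/
theorem equal_sharing_improves_balance (n : ℕ) (x : Fin n → ℝ)
    (hpos : ∀ i, 0 < x i) (E : ℝ) (hE : 0 < E) :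
    (∑ i, (x i + E / (n : ℝ)) ^ 2) / ((∑ i, x i) + E) ^ 2
      ≤ (∑ i, x i ^ 2) / (∑ i, x i) ^ 2 := by
  rcases Nat.eq_zero_or_pos n with hn | hn
  · subst hn
    simp
  have hn0 : (0 : ℝ) < (n : ℝ) := by exact_mod_cast hn
  set S := ∑ i, x i with hS
  set Q := ∑ i, x i ^ 2 with hQ
  have hSpos : 0 < S := Finset.sum_pos (fun i _ => hpos i) (by simp [Finset.univ_nonempty_iff, Fin.pos_iff_nonempty.mp hn])
  have hQpos : 0 < Q := Finset.sum_pos (fun i _ => pow_pos (hpos i) 2) (by simp [Finset.univ_nonempty_iff, Fin.pos_iff_nonempty.mp hn])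
  have hCS : S ^ 2 ≤ (n : ℝ) * Q := by
    have := sq_sum_le_card_mul_sum_sq (s := (Finset.univ : Finset (Fin n))) (f := x)
    simpa [hS, hQ] using this
  have hnum : (∑ i, (x i + E / (n : ℝ)) ^ 2) = Q + 2 * E * S / n + E ^ 2 / n := by
    rw [hQ, hS]
    rw [Finset.sum_congr rfl (fun i _ => by ring :
      ∀ i ∈ Finset.univ, (x i + E / n) ^ 2 = x i ^ 2 + 2 * (E / n) * x i + (E / n) ^ 2)]
    rw [Finset.sum_add_distrib, Finset.sum_add_distrib, ← Finset.mul_sum, Finset.sum_const,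
      Finset.card_univ, Fintype.card_fin, nsmul_eq_mul]
    field_simp
  rw [hnum]
  rw [div_le_div_iff₀ (by positivity) (by positivity)]
  have key : 2 * E * S / n * S ^ 2 + E ^ 2 / n * S ^ 2 ≤ Q * (2 * S * E) + Q * E ^ 2 := by
    have h1 : 2 * E * S / n * S ^ 2 ≤ Q * (2 * S * E) := by
      have : S ^ 2 * (2 * E * S) ≤ (n : ℝ) * Q * (2 * E * S) :=
        mul_le_mul_of_nonneg_right hCS (by positivity)
      calc 2 * E * S / n * S ^ 2 = (S ^ 2 * (2 * E * S)) / n := by ring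
        _ ≤ ((n : ℝ) * Q * (2 * E * S)) / n := by gcongr
        _ = Q * (2 * S * E) := by field_simp
    have h2 : E ^ 2 / n * S ^ 2 ≤ Q * E ^ 2 := by
      have : S ^ 2 * E ^ 2 ≤ (n : ℝ) * Q * E ^ 2 :=
        mul_le_mul_of_nonneg_right hCS (by positivity)
      calc E ^ 2 / n * S ^ 2 = (S ^ 2 * E ^ 2) / n := by ring
        _ ≤ ((n : ℝ) * Q * E ^ 2) / n := by gcongr
        _ = Q * E ^ 2 := by field_simp
    linarith
  nlinarith [key, sq_nonneg S, sq_nonneg (S + E)]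
end

section
/- Let x : Fin n → ℝ with each x_i > 0, X = ∑ x_i, E > 0, and 1 ≤ k ≤ n. Then ((∑_{i=1}^k (x_i + E/k)^2) + ∑_{i=k+1}^n x_i^2)/(X+E)^2 ≤ (∑_{i=1}^n x_i^2)/X^2 if and only if X^2·(E + 2∑_{i=1}^k x_i) ≤ k·(E + 2X)·(∑_{i=1}^n x_i^2). -/
open Finset

lemma card_filter_lt_fin (n k : ℕ) (hkn : k ≤ n) :
    (univ.filter (fun i : Fin n => (i : ℕ) < k)).card = k := by
  have : univ.filter (fun i : Fin n => (i : ℕ) < k) =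
      (Finset.range k).attachFin (fun m hm => lt_of_lt_of_le (Finset.mem_range.mp hm) hkn) := by
    ext i
    simp [Finset.mem_attachFin]
  rw [this, Finset.card_attachFin, Finset.card_range]

/-- Lemma 1: the `k`-top rule weakly improves the HHI iff
`X^2 (E + 2 ∑_{i≤k} x_i) ≤ k (E + 2X) ∑ x_i^2`. -/
theorem ktop_improves_iff (n k : ℕ) (hk1 : 1 ≤ k) (hkn : k ≤ n) (x : Fin n → ℝ)
    (hpos : ∀ i, 0 < x i) (E : ℝ) (hE : 0 < E) :
    ((∑ i ∈ univ.filter (fun i : Fin n => (i : ℕ) < k), (x i + E / (k : ℝ)) ^ 2) +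
        ∑ i ∈ univ.filter (fun i : Fin n => ¬ (i : ℕ) < k), x i ^ 2) /
        ((∑ i, x i) + E) ^ 2 ≤ (∑ i, x i ^ 2) / (∑ i, x i) ^ 2 ↔
      (∑ i, x i) ^ 2 * (E + 2 * ∑ i ∈ univ.filter (fun i : Fin n => (i : ℕ) < k), x i)
        ≤ (k : ℝ) * (E + 2 * ∑ i, x i) * ∑ i, x i ^ 2 := by
  have hkpos : (0:ℝ) < (k : ℝ) := by exact_mod_cast hk1
  set F := univ.filter (fun i : Fin n => (i : ℕ) < k) with hF
  have hcard : (F.card : ℝ) = (k : ℝ) := by exact_mod_cast card_filter_lt_fin n k hkn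
  set X := ∑ i, x i with hXdef
  have hn : 0 < n := lt_of_lt_of_le hk1 hkn
  have hXpos : 0 < X := Finset.sum_pos (fun i _ => hpos i) ⟨⟨0, hn⟩, mem_univ _⟩
  set S2 := ∑ i, x i ^ 2 with hS2def
  set T := ∑ i ∈ F, x i with hTdef
  have hexp : ∑ i ∈ F, (x i + E / (k : ℝ)) ^ 2
      = (∑ i ∈ F, x i ^ 2) + 2 * (E / k) * T + k * (E / k) ^ 2 := by
    have : ∀ i ∈ F, (x i + E / (k : ℝ)) ^ 2
        = x i ^ 2 + 2 * (E / k) * x i + (E / k) ^ 2 := by intro i _; ring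
    rw [Finset.sum_congr rfl this, Finset.sum_add_distrib, Finset.sum_add_distrib,
      Finset.sum_const, ← Finset.mul_sum, nsmul_eq_mul, hcard, hTdef]
  have hsplit : (∑ i ∈ F, x i ^ 2) + ∑ i ∈ univ.filter (fun i : Fin n => ¬ (i : ℕ) < k), x i ^ 2
      = S2 := Finset.sum_filter_add_sum_filter_not univ _ _
  obtain ⟨e, hep, rfl⟩ : ∃ e, 0 < e ∧ E = (k:ℝ) * e :=
    ⟨E / k, div_pos hE hkpos, by field_simp⟩
  have hk0 : (k:ℝ) ≠ 0 := ne_of_gt hkpos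
  have hek : (k:ℝ) * e / k = e := by field_simp
  rw [hexp]
  have hrw : (∑ i ∈ F, x i ^ 2) + 2 * ((k:ℝ) * e / k) * T + k * ((k:ℝ) * e / k) ^ 2 +
      ∑ i ∈ univ.filter (fun i : Fin n => ¬ (i : ℕ) < k), x i ^ 2
      = S2 + 2 * e * T + k * e ^ 2 := by
    rw [hek, ← hsplit]; ring
  rw [hrw, div_le_div_iff₀ (by positivity) (by positivity)]
  constructor <;> intro h
  · nlinarith [hep, h, hkpos, hXpos]
  · nlinarith [hep, h, hkpos, hXpos]
end

section
/- Let x : Fin n → ℝ with x_1 ≥ ... ≥ x_n > 0, X = ∑ x_i, E > 0. Then there exists k* ∈ {1,...,n} such that for all k < k*, the HHI after applying the k-top rule exceeds the original HHI (∑ x_i^2)/X^2, and for all k ≥ k*, the HHI after applying the k-top rule is at most the original HHI. -/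
open Finset

private lemma ktop_card (n k : ℕ) (h : k ≤ n) :
    (univ.filter (fun i : Fin n => (i : ℕ) < k)).card = k := by
  rw [Finset.card_filter]
  rw [Fin.sum_univ_eq_sum_range (fun i => if i < k then 1 else 0)]
  rw [Finset.sum_ite, Finset.sum_const, Finset.sum_const]
  have : (Finset.range n).filter (· < k) = Finset.range k := by
    ext m; simp; omega
  simp [this]

private lemma ktop_insert (n k : ℕ) (h : k < n) :
    (univ.filter (fun i : Fin n => (i : ℕ) < k + 1)) =
      insert ⟨k, h⟩ (univ.filter (fun i : Fin n => (i : ℕ) < k)) := by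
  ext i
  simp only [Finset.mem_insert, Finset.mem_filter, Finset.mem_univ, true_and]
  constructor
  · intro hi
    rcases Nat.lt_succ_iff_lt_or_eq.mp hi with h1 | h1
    · exact Or.inr h1
    · exact Or.inl (Fin.ext h1)
  · rintro (rfl | hi)
    · exact Nat.lt_succ_self k
    · exact Nat.lt_succ_of_lt hi

/-- Proposition 3 (single crossing): there is a threshold `k*` such that the `k`-top rule
hurts the HHI for `k < k*` and weakly improves it for `k ≥ k*`. -/
theorem ktop_single_crossing (n : ℕ) (hn : 1 ≤ n) (x : Fin n → ℝ)
    (hpos : ∀ i, 0 < x i) (hmono : Antitone x) (E : ℝ) (hE : 0 < E) :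
    ∃ kstar : ℕ, 1 ≤ kstar ∧ kstar ≤ n ∧
      (∀ k : ℕ, 1 ≤ k → k < kstar →
        ((∑ i ∈ univ.filter (fun i : Fin n => (i : ℕ) < k), (x i + E / (k : ℝ)) ^ 2) +
            ∑ i ∈ univ.filter (fun i : Fin n => ¬ (i : ℕ) < k), x i ^ 2) /
            ((∑ i, x i) + E) ^ 2 > (∑ i, x i ^ 2) / (∑ i, x i) ^ 2) ∧
      (∀ k : ℕ, kstar ≤ k → k ≤ n →
        ((∑ i ∈ univ.filter (fun i : Fin n => (i : ℕ) < k), (x i + E / (k : ℝ)) ^ 2) +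
            ∑ i ∈ univ.filter (fun i : Fin n => ¬ (i : ℕ) < k), x i ^ 2) /
            ((∑ i, x i) + E) ^ 2 ≤ (∑ i, x i ^ 2) / (∑ i, x i) ^ 2) := by
  classical
  set X : ℝ := ∑ i, x i with hX
  set N0 : ℝ := ∑ i, x i ^ 2 with hN0
  set S : ℕ → ℝ := fun k => ∑ i ∈ univ.filter (fun i : Fin n => (i : ℕ) < k), x i with hS
  set g : ℕ → ℝ := fun k => (2 * E * S k + E ^ 2) / k with hg
  have hXpos : 0 < X :=
    Finset.sum_pos (fun i _ => hpos i) ⟨⟨0, by omega⟩, Finset.mem_univ _⟩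
  have hN0pos : 0 < N0 := by
    refine Finset.sum_pos (fun i _ => pow_pos (hpos i) 2) ⟨⟨0, by omega⟩, Finset.mem_univ _⟩
  -- numerator formula
  have hnum : ∀ k : ℕ, 1 ≤ k → k ≤ n →
      ((∑ i ∈ univ.filter (fun i : Fin n => (i : ℕ) < k), (x i + E / (k : ℝ)) ^ 2) +
        ∑ i ∈ univ.filter (fun i : Fin n => ¬ (i : ℕ) < k), x i ^ 2) = N0 + g k := by
    intro k hk1 hkn
    have hkpos : (0 : ℝ) < (k : ℝ) := by exact_mod_cast hk1
    have hexp : ∀ i ∈ univ.filter (fun i : Fin n => (i : ℕ) < k),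
        (x i + E / (k : ℝ)) ^ 2 = x i ^ 2 + (2 * E / k) * x i + (E / k) ^ 2 := by
      intro i _; ring
    rw [Finset.sum_congr rfl hexp]
    rw [Finset.sum_add_distrib, Finset.sum_add_distrib, ← Finset.mul_sum,
      Finset.sum_const, ktop_card n k hkn]
    have hsplit : (∑ i ∈ univ.filter (fun i : Fin n => (i : ℕ) < k), x i ^ 2) +
        ∑ i ∈ univ.filter (fun i : Fin n => ¬ (i : ℕ) < k), x i ^ 2 = N0 :=
      Finset.sum_filter_add_sum_filter_not _ _ _
    have : (∑ i ∈ univ.filter (fun i : Fin n => (i : ℕ) < k), x i ^ 2) +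
          (2 * E / ↑k) * S k + ↑k • (E / ↑k) ^ 2 +
          ∑ i ∈ univ.filter (fun i : Fin n => ¬ (i : ℕ) < k), x i ^ 2
        = ((∑ i ∈ univ.filter (fun i : Fin n => (i : ℕ) < k), x i ^ 2) +
            ∑ i ∈ univ.filter (fun i : Fin n => ¬ (i : ℕ) < k), x i ^ 2)
          + ((2 * E / ↑k) * S k + ↑k * (E / ↑k) ^ 2) := by
      push_cast; ring
    rw [this, hsplit, hg]
    field_simp
  -- S recursion and bound
  have hSsucc : ∀ k : ℕ, ∀ h : k < n, S (k + 1) = S k + x ⟨k, h⟩ := by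
    intro k h
    simp only [hS]
    rw [ktop_insert n k h, Finset.sum_insert (by simp)]
    ring
  have hSbound : ∀ k : ℕ, ∀ h : k < n, (k : ℝ) * x ⟨k, h⟩ ≤ S k := by
    intro k h
    have : ∀ i ∈ univ.filter (fun i : Fin n => (i : ℕ) < k), x ⟨k, h⟩ ≤ x i := by
      intro i hi
      simp only [Finset.mem_filter] at hi
      exact hmono (by exact_mod_cast Nat.le_of_lt hi.2)
    calc (k : ℝ) * x ⟨k, h⟩
        = (univ.filter (fun i : Fin n => (i : ℕ) < k)).card * x ⟨k, h⟩ := by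
          rw [ktop_card n k (Nat.le_of_lt h)]
      _ = ∑ _i ∈ univ.filter (fun i : Fin n => (i : ℕ) < k), x ⟨k, h⟩ := by
          rw [Finset.sum_const]; ring
      _ ≤ S k := Finset.sum_le_sum this
  have hSpos : ∀ k : ℕ, 0 ≤ S k :=
    fun k => Finset.sum_nonneg (fun i _ => (hpos i).le)
  -- g is antitone step
  have hgstep : ∀ k : ℕ, 1 ≤ k → k < n → g (k + 1) ≤ g k := by
    intro k hk1 hkn
    have hkpos : (0 : ℝ) < (k : ℝ) := by exact_mod_cast hk1
    have h1 := hSsucc k hkn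
    have h2 := hSbound k hkn
    have hxk : 0 < x ⟨k, hkn⟩ := hpos _
    rw [hg]
    rw [div_le_div_iff₀ (by push_cast; linarith) hkpos]
    push_cast
    rw [h1]
    nlinarith [hSpos k, sq_nonneg E]
  have hganti : ∀ k1 k2 : ℕ, 1 ≤ k1 → k1 ≤ k2 → k2 ≤ n → g k2 ≤ g k1 := by
    intro k1 k2 hk1 hle
    induction k2, hle using Nat.le_induction with
    | base => intro _; exact le_rfl
    | succ m hm ih =>
        intro hmn
        exact le_trans (hgstep m (le_trans hk1 hm) (by omega)) (ih (by omega))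
  -- crossing predicate
  set P : ℕ → Prop := fun k => 1 ≤ k ∧ k ≤ n ∧ (N0 + g k) * X ^ 2 ≤ N0 * (X + E) ^ 2 with hP
  have hPn : P n := by
    refine ⟨hn, le_refl n, ?_⟩
    have hnpos : (0 : ℝ) < (n : ℝ) := by exact_mod_cast hn
    have hSn : S n = X := by
      simp only [hS, hX]
      congr 1
      ext i; simp [i.isLt]
    have hCS : X ^ 2 ≤ n * N0 := by
      have := sq_sum_le_card_mul_sum_sq (s := (univ : Finset (Fin n))) (f := x)
      simpa [hX, hN0] using this
    have hgn : g n = (2 * E * X + E ^ 2) / n := by simp only [hg, hSn]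
    rw [hgn]
    have h3 : (2 * E * X + E ^ 2) / n * X ^ 2 ≤ (2 * E * X + E ^ 2) * N0 := by
      rw [div_mul_eq_mul_div, div_le_iff₀ hnpos]
      have hpos2 : 0 < 2 * E * X + E ^ 2 := by positivity
      nlinarith
    nlinarith
  have hex : ∃ k, P k := ⟨n, hPn⟩
  set kstar := Nat.find hex with hkstar
  have hPk : P kstar := Nat.find_spec hex
  have hks1 : 1 ≤ kstar := hPk.1
  have hksn : kstar ≤ n := Nat.find_le hPn
  have hXE : 0 < X + E := by linarith
  have hXE2 : 0 < (X + E) ^ 2 := by positivity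
  have hX2 : 0 < X ^ 2 := by positivity
  refine ⟨kstar, hks1, hksn, ?_, ?_⟩
  · intro k hk1 hkk
    have hkn : k ≤ n := le_trans (Nat.le_of_lt hkk) hksn
    have hnP : ¬ P k := Nat.find_min hex hkk
    have hineq : N0 * (X + E) ^ 2 < (N0 + g k) * X ^ 2 := by
      by_contra hc
      exact hnP ⟨hk1, hkn, not_lt.mp hc⟩
    rw [hnum k hk1 hkn, gt_iff_lt, div_lt_div_iff₀ hX2 hXE2]
    linarith
  · intro k hk1 hkn
    have hgle : g k ≤ g kstar := hganti kstar k hks1 hk1 hkn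
    have hineq : (N0 + g k) * X ^ 2 ≤ N0 * (X + E) ^ 2 := by
      have := hPk.2.2
      nlinarith
    rw [hnum k (le_trans hks1 hk1) hkn, div_le_div_iff₀ hXE2 hX2]
    linarith
end

section
/- Let x : Fin n → ℝ with x_1 ≥ x_2 ≥ ... ≥ x_n > 0, X = ∑ x_i, E > 0, 1 ≤ k ≤ n, and let a : Fin k → ℝ satisfy a_1 ≥ a_2 ≥ ... ≥ a_k > 0, a_1 > 1/k, and ∑ a_i = 1. Then the HHI after the even k-top rule is at most the HHI after the uneven rule: (∑_{i=1}^k (x_i + E/k)^2 + ∑_{i>k} x_i^2)/(X+E)^2 ≤ (∑_{i=1}^k (x_i + a_i E)^2 + ∑_{i>k} x_i^2)/(X+E)^2. -/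
open Finset

/-- Proposition 4: the even `k`-top rule yields a (weakly) lower HHI than any uneven
monotone `k`-top rule with weights `a`. -/
theorem even_beats_uneven (n k : ℕ) (hk1 : 1 ≤ k) (hkn : k ≤ n) (x : Fin n → ℝ)
    (hpos : ∀ i, 0 < x i) (hmono : Antitone x) (E : ℝ) (hE : 0 < E)
    (a : Fin k → ℝ) (hapos : ∀ i, 0 < a i) (hamono : Antitone a)
    (hatop : a ⟨0, hk1⟩ > 1 / (k : ℝ)) (hasum : ∑ i, a i = 1) :
    (∑ i : Fin n, if (i : ℕ) < k then (x i + E / (k : ℝ)) ^ 2 else x i ^ 2) /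
        ((∑ i, x i) + E) ^ 2 ≤
      (∑ i : Fin n,
          if h : (i : ℕ) < k then (x i + a ⟨(i : ℕ), h⟩ * E) ^ 2 else x i ^ 2) /
        ((∑ i, x i) + E) ^ 2 := by
  have hk0 : (0:ℝ) < k := by exact_mod_cast hk1
  have hden : (0:ℝ) < ((∑ i, x i) + E) ^ 2 := by
    have : 0 < ∑ i, x i :=
      Finset.sum_pos (fun i _ => hpos i) ⟨⟨0, lt_of_lt_of_le hk1 hkn⟩, mem_univ _⟩
    positivity
  rw [div_le_div_iff_of_pos_right hden]
  set x' : Fin k → ℝ := fun j => x (Fin.castLE hkn j) with hx'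
  -- transfer sums over `Fin k` to sums over `Fin n`
  have hmap : ∀ f : Fin k → ℝ, ∑ j : Fin k, f j
      = ∑ i : Fin n, (if h : (i : ℕ) < k then f ⟨(i : ℕ), h⟩ else 0) := by
    intro f
    have hF : ∀ m : ℕ, (fun m => if h : m < k then f ⟨m, h⟩ else 0) m
        = if h : m < k then f ⟨m, h⟩ else 0 := fun _ => rfl
    rw [Fin.sum_univ_eq_sum_range (fun m => if h : m < k then f ⟨m, h⟩ else 0) n]
    rw [← Finset.sum_subset (Finset.range_subset_range.2 hkn)
        (by intro m _ hm; simp at hm; rw [dif_neg (by omega)])]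
    rw [← Fin.sum_univ_eq_sum_range (fun m => if h : m < k then f ⟨m, h⟩ else 0) k]
    exact Finset.sum_congr rfl fun j _ => by rw [dif_pos j.2]
  have h2 : (∑ i : Fin n, if h : (i : ℕ) < k then (x i + a ⟨(i : ℕ), h⟩ * E) ^ 2 else x i ^ 2)
      = (∑ j : Fin k, ((x' j + a j * E) ^ 2 - x' j ^ 2)) + ∑ i, x i ^ 2 := by
    rw [hmap, ← Finset.sum_add_distrib]
    refine Finset.sum_congr rfl fun i _ => ?_
    by_cases h : (i : ℕ) < k
    · rw [dif_pos h, dif_pos h]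
      have hx : x' ⟨(i : ℕ), h⟩ = x i := congrArg x (Fin.ext rfl)
      rw [hx]; ring
    · rw [dif_neg h, dif_neg h]; ring
  have h1 : (∑ i : Fin n, if (i : ℕ) < k then (x i + E / (k : ℝ)) ^ 2 else x i ^ 2)
      = (∑ j : Fin k, ((x' j + E / (k : ℝ)) ^ 2 - x' j ^ 2)) + ∑ i, x i ^ 2 := by
    rw [hmap, ← Finset.sum_add_distrib]
    refine Finset.sum_congr rfl fun i _ => ?_
    by_cases h : (i : ℕ) < k
    · rw [if_pos h, dif_pos h]
      have hx : x' ⟨(i : ℕ), h⟩ = x i := congrArg x (Fin.ext rfl)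
      rw [hx]; ring
    · rw [if_neg h, dif_neg h]; ring
  rw [h1, h2]
  have hx'mono : Antitone x' := fun i j hij =>
    hmono (by simp only [Fin.le_def, Fin.coe_castLE]; exact hij)
  have cheb : (∑ j, x' j) * (∑ j, a j) ≤ (k : ℝ) * ∑ j, x' j * a j := by
    simpa using (hx'mono.monovary hamono).sum_mul_sum_le_card_mul_sum
  have cauchy : (∑ j, a j) ^ 2 ≤ (k : ℝ) * ∑ j, a j ^ 2 := by
    simpa using sq_sum_le_card_mul_sum_sq (s := (univ : Finset (Fin k))) (f := a)
  rw [hasum] at cheb cauchy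
  have e1 : (∑ j : Fin k, ((x' j + E / (k : ℝ)) ^ 2 - x' j ^ 2))
      = 2 * (E / k) * (∑ j, x' j) + (k : ℝ) * (E / k) ^ 2 := by
    have h : (∑ j : Fin k, ((x' j + E / (k : ℝ)) ^ 2 - x' j ^ 2))
        = ∑ j : Fin k, (2 * (E / k) * x' j + (E / k) ^ 2) :=
      Finset.sum_congr rfl fun j _ => by ring
    rw [h, Finset.sum_add_distrib, ← Finset.mul_sum, Finset.sum_const, card_univ,
      Fintype.card_fin, nsmul_eq_mul]
  have e2 : (∑ j : Fin k, ((x' j + a j * E) ^ 2 - x' j ^ 2))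
      = 2 * E * (∑ j, x' j * a j) + E ^ 2 * ∑ j, a j ^ 2 := by
    have h : (∑ j : Fin k, ((x' j + a j * E) ^ 2 - x' j ^ 2))
        = ∑ j : Fin k, (2 * E * (x' j * a j) + E ^ 2 * a j ^ 2) :=
      Finset.sum_congr rfl fun j _ => by ring
    rw [h, Finset.sum_add_distrib, ← Finset.mul_sum, ← Finset.mul_sum]
  rw [e1, e2]
  have hA : 2 * E * (∑ j, x' j) ≤ 2 * E * ((k : ℝ) * ∑ j, x' j * a j) := by
    have := mul_le_mul_of_nonneg_left cheb (by linarith : (0:ℝ) ≤ 2 * E)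
    simpa using this
  have hB : E ^ 2 * 1 ≤ E ^ 2 * ((k : ℝ) * ∑ j, a j ^ 2) :=
    mul_le_mul_of_nonneg_left (by linarith [cauchy] : (1:ℝ) ≤ (k : ℝ) * ∑ j, a j ^ 2)
      (by positivity)
  have key2 : 2 * E * (∑ j, x' j) + E ^ 2
      ≤ (2 * E * (∑ j, x' j * a j) + E ^ 2 * ∑ j, a j ^ 2) * k := by nlinarith [hA, hB]
  have eL : 2 * (E / k) * (∑ j, x' j) + (k : ℝ) * (E / k) ^ 2
      = (2 * E * (∑ j, x' j) + E ^ 2) / k := by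
    field_simp
  rw [eL]
  have := (div_le_iff₀ hk0).2 key2
  linarith
end

section
/- Let x : Fin n → ℝ with x_1 ≥ ... ≥ x_n > 0, X = ∑ x_i, 1 ≤ k < n, and define f(E) = ((∑_{i=1}^k (x_i + E/k)^2) + ∑_{i>k} x_i^2)/(X+E)^2 for E ≥ 0. Then the derivative of f at E has the same sign as E·(∑_{i=k+1}^n x_i) − k·(∑_{i=1}^n x_i^2) + X·(∑_{i=1}^k x_i); in particular, f is monotonically increasing on E ≥ E* and decreasing on [0, E*], where E* = max{0, (k·∑ x_i^2 − X·∑_{i=1}^k x_i)/(∑_{i=k+1}^n x_i)}. -/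
open Finset

set_option maxHeartbeats 1000000

/-- Proposition 5: the post-`k`-top-rule HHI, as a function of the prize `E`, has derivative
`(2/(k(X+E)^3)) (E ∑_{i>k} x_i - k ∑ x_i^2 + X ∑_{i≤k} x_i)` and is decreasing on `[0, E*]`
and increasing on `[E*, ∞)`, where
`E* = max {0, (k ∑ x_i^2 - X ∑_{i≤k} x_i)/(∑_{i>k} x_i)}`. -/
theorem HHI_single_dipped_in_prize (n k : ℕ) (hk1 : 1 ≤ k) (hkn : k < n) (x : Fin n → ℝ)
    (hpos : ∀ i, 0 < x i) (hmono : Antitone x) :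
    (∀ E : ℝ, 0 ≤ E →
        HasDerivAt
          (fun F : ℝ =>
            ((∑ i ∈ univ.filter (fun i : Fin n => (i : ℕ) < k), (x i + F / (k : ℝ)) ^ 2) +
                ∑ i ∈ univ.filter (fun i : Fin n => ¬ (i : ℕ) < k), x i ^ 2) /
              ((∑ i, x i) + F) ^ 2)
          (2 / ((k : ℝ) * ((∑ i, x i) + E) ^ 3) *
            (E * (∑ i ∈ univ.filter (fun i : Fin n => ¬ (i : ℕ) < k), x i) -
              (k : ℝ) * (∑ i, x i ^ 2) +
              (∑ i, x i) * ∑ i ∈ univ.filter (fun i : Fin n => (i : ℕ) < k), x i))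
          E) ∧
      MonotoneOn
        (fun F : ℝ =>
          ((∑ i ∈ univ.filter (fun i : Fin n => (i : ℕ) < k), (x i + F / (k : ℝ)) ^ 2) +
              ∑ i ∈ univ.filter (fun i : Fin n => ¬ (i : ℕ) < k), x i ^ 2) /
            ((∑ i, x i) + F) ^ 2)
        (Set.Ici (max 0
          (((k : ℝ) * (∑ i, x i ^ 2) -
              (∑ i, x i) * ∑ i ∈ univ.filter (fun i : Fin n => (i : ℕ) < k), x i) /
            ∑ i ∈ univ.filter (fun i : Fin n => ¬ (i : ℕ) < k), x i))) ∧
      AntitoneOn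
        (fun F : ℝ =>
          ((∑ i ∈ univ.filter (fun i : Fin n => (i : ℕ) < k), (x i + F / (k : ℝ)) ^ 2) +
              ∑ i ∈ univ.filter (fun i : Fin n => ¬ (i : ℕ) < k), x i ^ 2) /
            ((∑ i, x i) + F) ^ 2)
        (Set.Icc 0 (max 0
          (((k : ℝ) * (∑ i, x i ^ 2) -
              (∑ i, x i) * ∑ i ∈ univ.filter (fun i : Fin n => (i : ℕ) < k), x i) /
            ∑ i ∈ univ.filter (fun i : Fin n => ¬ (i : ℕ) < k), x i))) := by
  have hk0 : (0:ℝ) < (k:ℝ) := by exact_mod_cast hk1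
  set T1 := univ.filter (fun i : Fin n => (i : ℕ) < k) with hT1
  set T2 := univ.filter (fun i : Fin n => ¬ (i : ℕ) < k) with hT2
  set A := ∑ i ∈ T1, x i with hA
  set B := ∑ i ∈ T2, x i with hBdef
  set X := ∑ i, x i with hXdef
  set S := ∑ i, x i ^ 2 with hSdef
  set Sk := ∑ i ∈ T1, x i ^ 2 with hSkdef
  set Sr := ∑ i ∈ T2, x i ^ 2 with hSrdef
  have hcard : T1.card = k := by
    rw [hT1, Finset.card_filter,
      Fin.sum_univ_eq_sum_range (fun i => if i < k then 1 else 0), ← Finset.card_filter]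
    have : (filter (fun i => i < k) (range n)) = range k := by ext i; simp; omega
    rw [this, Finset.card_range]
  have hXAB : X = A + B := by
    rw [hXdef, hA, hBdef, hT1, hT2, Finset.sum_filter_add_sum_filter_not]
  have hSsplit : S = Sk + Sr := by
    rw [hSdef, hSkdef, hSrdef, hT1, hT2, Finset.sum_filter_add_sum_filter_not]
  have hB : 0 < B := by
    refine Finset.sum_pos (fun i _ => hpos i) ⟨⟨k, hkn⟩, ?_⟩
    simp [hT2]
  have hX : 0 < X := by
    have : Nonempty (Fin n) := ⟨⟨0, by omega⟩⟩
    exact Finset.sum_pos (fun i _ => hpos i) univ_nonempty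
  -- derivative at any point with X + E > 0
  have hderiv : ∀ E : ℝ, 0 ≤ E →
      HasDerivAt (fun F : ℝ => ((∑ i ∈ T1, (x i + F / (k:ℝ)) ^ 2) + Sr) / (X + F) ^ 2)
        (2 / ((k:ℝ) * (X + E) ^ 3) * (E * B - (k:ℝ) * S + X * A)) E := by
    intro E hE
    have hXE : 0 < X + E := by linarith
    have hnum : HasDerivAt (fun F : ℝ => (∑ i ∈ T1, (x i + F / (k:ℝ)) ^ 2) + Sr)
        (∑ i ∈ T1, 2 * (x i + E / (k:ℝ)) * (1 / (k:ℝ))) E := by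
      refine HasDerivAt.add_const Sr ?_
      refine HasDerivAt.fun_sum (fun i _ => ?_)
      have h1 : HasDerivAt (fun F : ℝ => x i + F / (k:ℝ)) (1 / (k:ℝ)) E := by
        simpa using ((hasDerivAt_id E).div_const (k:ℝ)).const_add (x i)
      simpa [mul_comm, mul_assoc, mul_left_comm] using h1.fun_pow 2
    have hden : HasDerivAt (fun F : ℝ => (X + F) ^ 2) (2 * (X + E)) E := by
      have h1 : HasDerivAt (fun F : ℝ => X + F) 1 E := by
        simpa using (hasDerivAt_id E).const_add X
      simpa using h1.fun_pow 2
    have hd2 : ((X + E) ^ 2) ≠ 0 := by positivity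
    have := hnum.fun_div hden hd2
    refine this.congr_deriv ?_
    -- compute sums
    have hs1 : (∑ i ∈ T1, 2 * (x i + E / (k:ℝ)) * (1 / (k:ℝ))) = 2 / (k:ℝ) * (A + E) := by
      rw [Finset.sum_congr rfl (fun i _ => by ring :
        ∀ i ∈ T1, 2 * (x i + E / (k:ℝ)) * (1 / (k:ℝ)) = (2/(k:ℝ)) * x i + 2 * E / (k:ℝ)^2)]
      rw [Finset.sum_add_distrib, ← Finset.mul_sum, Finset.sum_const, hcard, ← hA]
      field_simp
      have hkk : (k:ℝ)^2 * (k:ℝ)⁻¹^2 = 1 := by rw [← mul_pow, mul_inv_cancel₀ hk0.ne', one_pow]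
      linear_combination (2*E) * hkk
    have hs2 : (∑ i ∈ T1, (x i + E / (k:ℝ)) ^ 2) = Sk + 2 * E / (k:ℝ) * A + E^2 / (k:ℝ) := by
      rw [Finset.sum_congr rfl (fun i _ => by ring :
        ∀ i ∈ T1, (x i + E / (k:ℝ)) ^ 2 = x i ^ 2 + (2 * E / (k:ℝ)) * x i + E^2/(k:ℝ)^2)]
      rw [Finset.sum_add_distrib, Finset.sum_add_distrib, ← Finset.mul_sum,
        Finset.sum_const, hcard, ← hA, ← hSkdef]
      field_simp
      have hkk : (k:ℝ)^2 * (k:ℝ)⁻¹^2 = 1 := by rw [← mul_pow, mul_inv_cancel₀ hk0.ne', one_pow]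
      linear_combination E^2 * hkk
    rw [hs1, hs2]
    have hk' : (k:ℝ) ≠ 0 := ne_of_gt hk0
    have hXE' : X + E ≠ 0 := ne_of_gt hXE
    field_simp
    rw [hXAB, hSsplit]
    ring
  have hmainderiv : ∀ E : ℝ, 0 ≤ E →
      HasDerivAt
        (fun F : ℝ => ((∑ i ∈ T1, (x i + F / (k:ℝ)) ^ 2) + Sr) / (X + F) ^ 2)
        (2 / ((k:ℝ) * (X + E) ^ 3) * (E * B - (k:ℝ) * S + X * A)) E := hderiv
  set f : ℝ → ℝ := fun F : ℝ => ((∑ i ∈ T1, (x i + F / (k:ℝ)) ^ 2) + Sr) / (X + F) ^ 2 with hf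
  set Estar : ℝ := max 0 (((k:ℝ) * S - X * A) / B) with hEstar
  have hEstar0 : 0 ≤ Estar := le_max_left _ _
  have hderivval : ∀ E : ℝ, 0 ≤ E → deriv f E
      = 2 / ((k:ℝ) * (X + E) ^ 3) * (E * B - (k:ℝ) * S + X * A) := fun E hE =>
    (hmainderiv E hE).deriv
  refine ⟨hmainderiv, ?_, ?_⟩
  · refine monotoneOn_of_deriv_nonneg (convex_Ici Estar) ?_ ?_ ?_
    · intro E hE
      exact ((hmainderiv E (hEstar0.trans hE)).continuousAt).continuousWithinAt
    · intro E hE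
      rw [interior_Ici] at hE
      exact ((hmainderiv E (hEstar0.trans hE.le)).differentiableAt).differentiableWithinAt
    · intro E hE
      rw [interior_Ici] at hE
      have hE0 : 0 ≤ E := hEstar0.trans hE.le
      rw [hderivval E hE0]
      have hXE : 0 < X + E := by linarith
      have h1 : 0 ≤ E * B - (k:ℝ) * S + X * A := by
        have hge : ((k:ℝ) * S - X * A) / B ≤ E := le_trans (le_max_right _ _) hE.le
        have := (div_le_iff₀ hB).mp hge
        linarith
      have h2 : 0 < 2 / ((k:ℝ) * (X + E) ^ 3) := by positivity
      positivity
  · refine antitoneOn_of_deriv_nonpos (convex_Icc 0 Estar) ?_ ?_ ?_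
    · intro E hE
      exact ((hmainderiv E hE.1).continuousAt).continuousWithinAt
    · intro E hE
      rw [interior_Icc] at hE
      exact ((hmainderiv E hE.1.le).differentiableAt).differentiableWithinAt
    · intro E hE
      rw [interior_Icc] at hE
      obtain ⟨hE0, hElt⟩ := hE
      rw [hderivval E hE0.le]
      have hXE : 0 < X + E := by linarith
      have hlt : E < ((k:ℝ) * S - X * A) / B := by
        rcases lt_max_iff.mp hElt with h | h
        · linarith
        · exact h
      have h1 : E * B - (k:ℝ) * S + X * A ≤ 0 := by
        have := (lt_div_iff₀ hB).mp hlt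
        linarith
      have h2 : 0 < 2 / ((k:ℝ) * (X + E) ^ 3) := by positivity
      have : 2 / ((k:ℝ) * (X + E) ^ 3) * (E * B - (k:ℝ) * S + X * A) ≤ 0 :=
        mul_nonpos_of_nonneg_of_nonpos h2.le h1
      linarith
end

section
/- Let x : Fin n → ℝ with x_1 ≥ ... ≥ x_n > 0, X = ∑ x_i, E > 0, 1 ≤ k ≤ n. Then the HHI after the k-top rule is at most the original HHI if and only if (k·∑ x_i^2 − X^2)·E ≥ 2X·(X·∑_{i=1}^k x_i − k·∑ x_i^2). -/
open Finset

/-- Reformulation of Lemma 1: the `k`-top rule weakly improves the HHI iff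
`(k ∑ x_i^2 - X^2) E ≥ 2X (X ∑_{i≤k} x_i - k ∑ x_i^2)`. -/
theorem ktop_improves_iff_linear (n k : ℕ) (hk1 : 1 ≤ k) (hkn : k ≤ n) (x : Fin n → ℝ)
    (hpos : ∀ i, 0 < x i) (hmono : Antitone x) (E : ℝ) (hE : 0 < E) :
    ((∑ i ∈ univ.filter (fun i : Fin n => (i : ℕ) < k), (x i + E / (k : ℝ)) ^ 2) +
        ∑ i ∈ univ.filter (fun i : Fin n => ¬ (i : ℕ) < k), x i ^ 2) /
        ((∑ i, x i) + E) ^ 2 ≤ (∑ i, x i ^ 2) / (∑ i, x i) ^ 2 ↔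
      ((k : ℝ) * (∑ i, x i ^ 2) - (∑ i, x i) ^ 2) * E ≥
        2 * (∑ i, x i) *
          ((∑ i, x i) * (∑ i ∈ univ.filter (fun i : Fin n => (i : ℕ) < k), x i) -
            (k : ℝ) * ∑ i, x i ^ 2) := by
  have hn : 0 < n := lt_of_lt_of_le hk1 hkn
  have hk0 : (0:ℝ) < (k:ℝ) := by exact_mod_cast hk1
  set S := ∑ i, x i with hS
  set Q := ∑ i, x i ^ 2 with hQ
  set T := ∑ i ∈ univ.filter (fun i : Fin n => (i : ℕ) < k), x i with hT
  have hSpos : 0 < S := Finset.sum_pos (fun i _ => hpos i) ⟨⟨0, hn⟩, mem_univ _⟩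
  have hcard : (univ.filter (fun i : Fin n => (i : ℕ) < k)).card = k := by
    have : (univ.filter (fun i : Fin n => (i : ℕ) < k))
        = (Finset.range k).attachFin (fun m hm => lt_of_lt_of_le (Finset.mem_range.mp hm) hkn) := by
      ext i
      simp [Finset.mem_attachFin]
    rw [this, Finset.card_attachFin, Finset.card_range]
  have hexp : (∑ i ∈ univ.filter (fun i : Fin n => (i : ℕ) < k), (x i + E / (k:ℝ)) ^ 2) +
      ∑ i ∈ univ.filter (fun i : Fin n => ¬ (i : ℕ) < k), x i ^ 2
      = Q + 2 * (E / (k:ℝ)) * T + (E / (k:ℝ))^2 * (k:ℝ) := by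
    have h1 : ∀ i ∈ univ.filter (fun i : Fin n => (i:ℕ) < k),
        (x i + E / (k:ℝ))^2 = x i ^2 + 2*(E/(k:ℝ))*x i + (E/(k:ℝ))^2 := fun i _ => by ring
    rw [Finset.sum_congr rfl h1, Finset.sum_add_distrib, Finset.sum_add_distrib,
        Finset.sum_const, hcard, ← Finset.mul_sum]
    rw [hQ, ← Finset.sum_filter_add_sum_filter_not univ (fun i : Fin n => (i:ℕ) < k)
        (fun i => x i ^ 2)]
    push_cast
    ring
  rw [hexp, div_le_div_iff₀ (by positivity) (by positivity)]
  have e1 : (k:ℝ) * ((Q + 2 * (E / (k:ℝ)) * T + (E / (k:ℝ))^2 * (k:ℝ)) * S ^ 2)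
      = ((k:ℝ)*Q + 2*E*T + E^2) * S^2 := by field_simp
  have e2 : (k:ℝ) * (Q * (S + E)^2) = (k:ℝ)*Q*(S+E)^2 := by ring
  rw [← mul_le_mul_iff_right₀ hk0, e1, e2]
  constructor
  · intro h
    nlinarith [hE, hSpos, mul_pos hE hE]
  · intro h
    nlinarith [mul_nonneg hE.le (sub_nonneg.mpr h), hE, hSpos]
end

section
/- Let x : Fin n → ℝ with x_1 ≥ ... ≥ x_n > 0, X = ∑ x_i, and k with 1 ≤ k ≤ n. If k·∑ x_i^2 ≥ X^2, then for every E > 0 the k-top rule weakly improves competitive balance (post-rule HHI ≤ original HHI). -/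
open Finset

/-- If `k ∑ x_i^2 ≥ X^2`, the `k`-top rule weakly improves the HHI for every prize `E > 0`. -/
theorem ktop_improves_of_large_k (n k : ℕ) (hk1 : 1 ≤ k) (hkn : k ≤ n) (x : Fin n → ℝ)
    (hpos : ∀ i, 0 < x i) (hmono : Antitone x)
    (hcond : (∑ i, x i) ^ 2 ≤ (k : ℝ) * ∑ i, x i ^ 2) :
    ∀ E : ℝ, 0 < E →
      ((∑ i ∈ univ.filter (fun i : Fin n => (i : ℕ) < k), (x i + E / (k : ℝ)) ^ 2) +
          ∑ i ∈ univ.filter (fun i : Fin n => ¬ (i : ℕ) < k), x i ^ 2) /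
          ((∑ i, x i) + E) ^ 2 ≤ (∑ i, x i ^ 2) / (∑ i, x i) ^ 2 := by
  intro E hE
  set X := ∑ i, x i with hX
  set S := ∑ i, x i ^ 2 with hS
  have hn : Nonempty (Fin n) := ⟨⟨0, lt_of_lt_of_le hk1 hkn⟩⟩
  have hkpos : (0:ℝ) < (k:ℝ) := by exact_mod_cast hk1
  have hXpos : 0 < X := Finset.sum_pos (fun i _ => hpos i) univ_nonempty
  set c := E / (k:ℝ) with hc
  have hcpos : 0 < c := div_pos hE hkpos
  have hck : (k:ℝ) * c = E := by rw [hc]; field_simp [hkpos.ne']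
  have hcard : (univ.filter (fun i : Fin n => (i : ℕ) < k)).card = k := by
    simpa [Fintype.card_subtype] using Fintype.card_fin_lt_of_le hkn
  set T := ∑ i ∈ univ.filter (fun i : Fin n => (i : ℕ) < k), x i with hT
  have hsum : (∑ i ∈ univ.filter (fun i : Fin n => (i : ℕ) < k), (x i + c) ^ 2) +
      ∑ i ∈ univ.filter (fun i : Fin n => ¬ (i : ℕ) < k), x i ^ 2
      = S + 2 * c * T + (k:ℝ) * c ^ 2 := by
    have h1 : ∑ i ∈ univ.filter (fun i : Fin n => (i : ℕ) < k), (x i + c) ^ 2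
        = (∑ i ∈ univ.filter (fun i : Fin n => (i : ℕ) < k), x i ^ 2)
          + (2 * c) * T + (k:ℝ) * c ^ 2 := by
      calc ∑ i ∈ univ.filter (fun i : Fin n => (i : ℕ) < k), (x i + c) ^ 2
          = ∑ i ∈ univ.filter (fun i : Fin n => (i : ℕ) < k),
              (x i ^ 2 + (2 * c) * x i + c ^ 2) :=
            Finset.sum_congr rfl (fun i _ => by ring)
        _ = _ := by
            rw [Finset.sum_add_distrib, Finset.sum_add_distrib, Finset.sum_const, hcard,
              ← Finset.mul_sum, ← hT, nsmul_eq_mul]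
    rw [h1, hS, ← Finset.sum_filter_add_sum_filter_not univ (fun i : Fin n => (i:ℕ) < k)
      (fun i => x i ^ 2)]
    ring
  rw [hsum]
  have hTX : T ≤ X := by
    rw [hT, hX]
    exact Finset.sum_le_sum_of_subset_of_nonneg (Finset.filter_subset _ _)
      (fun i _ _ => (hpos i).le)
  have hTpos : 0 ≤ T := Finset.sum_nonneg fun i _ => (hpos i).le
  have hTXkS : T * X ≤ (k:ℝ) * S := by
    calc T * X ≤ X * X := mul_le_mul_of_nonneg_right hTX hXpos.le
    _ ≤ (k:ℝ) * S := by nlinarith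
  rw [div_le_div_iff₀ (by positivity) (by positivity), ← hck]
  nlinarith [mul_le_mul_of_nonneg_left hTXkS (by positivity : (0:ℝ) ≤ 2 * c * X),
    mul_le_mul_of_nonneg_left hcond (by positivity : (0:ℝ) ≤ (k:ℝ) * c ^ 2)]
end

section
/- Let x : Fin n → ℝ with x_1 ≥ ... ≥ x_n > 0, X = ∑ x_i, and k with 1 ≤ k ≤ n. If k·∑ x_i^2 ≤ X·∑_{i=1}^k x_i and the inequality is strict, then for every E > 0 the k-top rule strictly hurts competitive balance (post-rule HHI > original HHI). -/
open Finset

/-- If `k ∑ x_i^2 < X ∑_{i≤k} x_i`, the `k`-top rule strictly hurts the HHI for every `E > 0`. -/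
theorem ktop_hurts_of_small_k (n k : ℕ) (hk1 : 1 ≤ k) (hkn : k ≤ n) (x : Fin n → ℝ)
    (hpos : ∀ i, 0 < x i) (hmono : Antitone x)
    (hcond : (k : ℝ) * (∑ i, x i ^ 2) <
      (∑ i, x i) * ∑ i ∈ univ.filter (fun i : Fin n => (i : ℕ) < k), x i) :
    ∀ E : ℝ, 0 < E →
      ((∑ i ∈ univ.filter (fun i : Fin n => (i : ℕ) < k), (x i + E / (k : ℝ)) ^ 2) +
          ∑ i ∈ univ.filter (fun i : Fin n => ¬ (i : ℕ) < k), x i ^ 2) /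
          ((∑ i, x i) + E) ^ 2 > (∑ i, x i ^ 2) / (∑ i, x i) ^ 2 := by
  intro E hE
  have hcard : ((univ : Finset (Fin n)).filter (fun i : Fin n => (i : ℕ) < k)).card = k := by
    have h : (univ : Finset (Fin n)).filter (fun i : Fin n => (i : ℕ) < k)
        = (univ : Finset (Fin k)).map (Fin.castLEEmb hkn) := by
      ext i
      simp only [mem_filter, mem_univ, true_and, mem_map, Fin.castLEEmb]
      constructor
      · intro h; exact ⟨⟨i, h⟩, by simp [Fin.castLE]⟩
      · rintro ⟨j, rfl⟩; exact j.isLt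
    rw [h, card_map, card_univ, Fintype.card_fin]
  have hkR : (0:ℝ) < (k:ℝ) := by exact_mod_cast hk1
  have hc : 0 < E / (k:ℝ) := div_pos hE hkR
  have hS : 0 < ∑ i, x i :=
    Finset.sum_pos (fun i _ => hpos i) ⟨⟨0, lt_of_lt_of_le hk1 hkn⟩, mem_univ _⟩
  have hT_le : (∑ i ∈ univ.filter (fun i : Fin n => (i : ℕ) < k), x i) ≤ ∑ i, x i :=
    Finset.sum_le_sum_of_subset_of_nonneg (filter_subset _ _) (fun i _ _ => (hpos i).le)
  have hsplit : (∑ i ∈ univ.filter (fun i : Fin n => (i : ℕ) < k), (x i + E / (k:ℝ)) ^ 2)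
      = (∑ i ∈ univ.filter (fun i : Fin n => (i : ℕ) < k), x i ^ 2)
        + 2 * (E / (k:ℝ)) * (∑ i ∈ univ.filter (fun i : Fin n => (i : ℕ) < k), x i)
        + (k:ℝ) * (E / (k:ℝ)) ^ 2 := by
    rw [Finset.sum_congr rfl (fun i _ => by ring :
        ∀ i ∈ univ.filter (fun i : Fin n => (i : ℕ) < k),
          (x i + E / (k:ℝ)) ^ 2 = x i ^ 2 + 2 * (E / (k:ℝ)) * x i + (E / (k:ℝ)) ^ 2),
      Finset.sum_add_distrib, Finset.sum_add_distrib, ← Finset.mul_sum,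
      Finset.sum_const, hcard, nsmul_eq_mul]
  have hQsplit : (∑ i, x i ^ 2)
      = (∑ i ∈ univ.filter (fun i : Fin n => (i : ℕ) < k), x i ^ 2)
        + ∑ i ∈ univ.filter (fun i : Fin n => ¬ (i : ℕ) < k), x i ^ 2 :=
    (Finset.sum_filter_add_sum_filter_not _ _ _).symm
  have hEk : (E / (k:ℝ)) * (k:ℝ) = E := div_mul_cancel₀ E (ne_of_gt hkR)
  rw [gt_iff_lt, div_lt_div_iff₀ (by positivity) (by positivity)]
  rw [hsplit]
  set S := ∑ i, x i
  set Q := ∑ i, x i ^ 2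
  set T := ∑ i ∈ univ.filter (fun i : Fin n => (i : ℕ) < k), x i
  set c := E / (k:ℝ)
  set Q1 := ∑ i ∈ univ.filter (fun i : Fin n => (i : ℕ) < k), x i ^ 2
  set Q2 := ∑ i ∈ univ.filter (fun i : Fin n => ¬ (i : ℕ) < k), x i ^ 2
  have hre : Q1 + 2 * c * T + (k:ℝ) * c ^ 2 + Q2 = Q + 2 * c * T + (k:ℝ) * c ^ 2 := by
    rw [hQsplit]; ring
  rw [hre]
  have hQpos : 0 < Q :=
    Finset.sum_pos (fun i _ => pow_pos (hpos i) 2) ⟨⟨0, lt_of_lt_of_le hk1 hkn⟩, mem_univ _⟩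
  -- goal: Q * (S + E)^2 < (Q + 2*c*T + k*c^2) * S^2
  have h1 : (k:ℝ) * Q < S * T := hcond
  rw [← hEk]
  nlinarith [mul_pos (mul_pos hc hS) (sub_pos.mpr h1),
    mul_pos (mul_pos hkR (mul_pos hc hc)) (sub_pos.mpr h1),
    mul_nonneg (mul_nonneg hkR.le (mul_nonneg hc.le hc.le)) (mul_nonneg hS.le (sub_nonneg.mpr hT_le))]
end

section
/- Let x : Fin n → ℝ with x_1 ≥ ... ≥ x_n > 0, X = ∑ x_i, and k with 1 ≤ k < n satisfying X·∑_{i=1}^k x_i < k·∑ x_i^2 < X^2. Define Ê(k) = 2X·(k·∑ x_i^2 − X·∑_{i=1}^k x_i)/(X^2 − k·∑ x_i^2). If also X·∑_{i=1}^{k+1} x_i < (k+1)·∑ x_i^2 < X^2, then Ê(k+1) ≥ Ê(k). -/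
open Finset

/-- Lemma 3: the threshold `Ê(k) = 2X (k ∑ x_i^2 - X ∑_{i≤k} x_i)/(X^2 - k ∑ x_i^2)`
is increasing in `k` (under the relevant interiority conditions). -/
theorem Ehat_increasing (n k : ℕ) (hk1 : 1 ≤ k) (hkn : k < n) (x : Fin n → ℝ)
    (hpos : ∀ i, 0 < x i) (hmono : Antitone x)
    (h1 : (∑ i, x i) * (∑ i ∈ univ.filter (fun i : Fin n => (i : ℕ) < k), x i) <
      (k : ℝ) * ∑ i, x i ^ 2)
    (h2 : (k : ℝ) * (∑ i, x i ^ 2) < (∑ i, x i) ^ 2)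
    (h3 : (∑ i, x i) * (∑ i ∈ univ.filter (fun i : Fin n => (i : ℕ) < k + 1), x i) <
      ((k : ℝ) + 1) * ∑ i, x i ^ 2)
    (h4 : ((k : ℝ) + 1) * (∑ i, x i ^ 2) < (∑ i, x i) ^ 2) :
    2 * (∑ i, x i) *
        ((k : ℝ) * (∑ i, x i ^ 2) -
          (∑ i, x i) * ∑ i ∈ univ.filter (fun i : Fin n => (i : ℕ) < k), x i) /
        ((∑ i, x i) ^ 2 - (k : ℝ) * ∑ i, x i ^ 2) ≤
      2 * (∑ i, x i) *
        (((k : ℝ) + 1) * (∑ i, x i ^ 2) -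
          (∑ i, x i) * ∑ i ∈ univ.filter (fun i : Fin n => (i : ℕ) < k + 1), x i) /
        ((∑ i, x i) ^ 2 - ((k : ℝ) + 1) * ∑ i, x i ^ 2) := by
  set X := ∑ i, x i with hX
  set S := ∑ i, x i ^ 2 with hS
  set A := ∑ i ∈ univ.filter (fun i : Fin n => (i : ℕ) < k), x i with hA
  set K : Fin n := ⟨k, hkn⟩ with hK
  -- A_{k+1} = A + x K
  have hins : (univ.filter (fun i : Fin n => (i : ℕ) < k + 1))
      = insert K (univ.filter (fun i : Fin n => (i : ℕ) < k)) := by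
    ext i
    simp [Fin.ext_iff, hK]
    omega
  have hA1 : (∑ i ∈ univ.filter (fun i : Fin n => (i : ℕ) < k + 1), x i) = x K + A := by
    rw [hins, Finset.sum_insert (by simp [hK])]
  rw [hA1]
  -- card of the filter is k
  have hcard : (univ.filter (fun i : Fin n => (i : ℕ) < k)).card = k := by
    have : (univ.filter (fun i : Fin n => (i : ℕ) < k))
        = Finset.map (Fin.castLEEmb hkn.le) univ := by
      ext i
      simp [Fin.castLEEmb, Fin.ext_iff]
      constructor
      · intro h; exact ⟨⟨i, h⟩, rfl⟩
      · rintro ⟨j, hj⟩; rw [← hj]; exact j.isLt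
    rw [this]
    simp
  -- A ≥ k * x K
  have hAk : (k : ℝ) * x K ≤ A := by
    have := Finset.card_nsmul_le_sum (univ.filter (fun i : Fin n => (i : ℕ) < k))
      x (x K) ?_
    · rw [hcard] at this
      simpa [nsmul_eq_mul] using this
    · intro i hi
      apply hmono
      simp at hi
      exact Fin.le_def.mpr (by simpa [hK] using hi.le)
  -- X - A ≥ x K
  have hT : x K ≤ X - A := by
    have hsplit : A + ∑ i ∈ univ.filter (fun i : Fin n => ¬ (i : ℕ) < k), x i = X :=
      Finset.sum_filter_add_sum_filter_not univ _ x
    have : x K ≤ ∑ i ∈ univ.filter (fun i : Fin n => ¬ (i : ℕ) < k), x i := by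
      apply Finset.single_le_sum (fun i _ => (hpos i).le)
      simp [hK]
    linarith
  have hXpos : 0 < X := Finset.sum_pos (fun i _ => hpos i) ⟨K, by simp⟩
  have hxK : 0 < x K := hpos K
  -- S > X * x K
  have hSx : X * x K ≤ S := by
    have hk0 : (0:ℝ) < (k:ℝ) := by exact_mod_cast hk1
    nlinarith [mul_le_mul_of_nonneg_left hAk hXpos.le]
  have hd1 : 0 < X ^ 2 - (k : ℝ) * S := by linarith
  have hd2 : 0 < X ^ 2 - ((k : ℝ) + 1) * S := by linarith
  rw [div_le_div_iff₀ hd1 hd2]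
  nlinarith [mul_nonneg (by linarith : (0:ℝ) ≤ X - A - x K + x K) (by linarith : (0:ℝ) ≤ S - X * x K),
    mul_nonneg (sub_nonneg.2 hT) (sub_nonneg.2 hSx),
    mul_nonneg hxK.le (by linarith : (0:ℝ) ≤ (k:ℝ) * S - X * A),
    mul_pos hXpos hxK, hXpos, hxK]
end

section
/- For any x : Fin n → ℝ with all x_i > 0 and any E > 0, the HHI after adding E/n to every budget is strictly less than the original HHI unless all budgets are equal: (∑ (x_i + E/n)^2)/(X+E)^2 < (∑ x_i^2)/X^2 whenever the x_i are not all equal, where X = ∑ x_i. -/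
open Finset

/-- Strict version of Proposition 2: equal sharing strictly decreases the HHI whenever the
budgets are not all equal. -/
theorem equal_sharing_strictly_improves (n : ℕ) (x : Fin n → ℝ)
    (hpos : ∀ i, 0 < x i) (E : ℝ) (hE : 0 < E) (hne : ¬ ∀ i j, x i = x j) :
    (∑ i, (x i + E / (n : ℝ)) ^ 2) / ((∑ i, x i) + E) ^ 2 <
      (∑ i, x i ^ 2) / (∑ i, x i) ^ 2 := by
  have hn : 0 < n := Nat.pos_of_ne_zero (by rintro rfl; exact hne fun i => i.elim0)
  have hm : (0 : ℝ) < (n : ℝ) := by exact_mod_cast hn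
  set S := ∑ i, x i with hS
  set Q := ∑ i, x i ^ 2 with hQ
  have hSpos : 0 < S := Finset.sum_pos (fun i _ => hpos i) (by simp [Finset.univ_nonempty_iff, ← Fin.pos_iff_nonempty, hn])
  -- strict Cauchy-Schwarz: S^2 < n * Q
  have key : S ^ 2 < (n : ℝ) * Q := by
    obtain ⟨i, j, hij⟩ : ∃ i j, x i ≠ x j := by
      by_contra h; push_neg at h; exact hne h
    have hvar : 0 < ∑ k, (x k - S / n) ^ 2 := by
      have : x i ≠ S / n ∨ x j ≠ S / n := by
        by_contra h; push_neg at h; exact hij (h.1.trans h.2.symm)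
      rcases this with h | h
      · exact Finset.sum_pos' (fun k _ => sq_nonneg _)
          ⟨i, Finset.mem_univ i, by have := sub_ne_zero.mpr h; positivity⟩
      · exact Finset.sum_pos' (fun k _ => sq_nonneg _)
          ⟨j, Finset.mem_univ j, by have := sub_ne_zero.mpr h; positivity⟩
    have hexp : ∑ k, (x k - S / n) ^ 2 = Q - S ^ 2 / n := by
      have : ∀ k, (x k - S / n) ^ 2 = x k ^ 2 - 2 * (S / n) * x k + (S / n) ^ 2 := by
        intro k; ring
      simp only [this, Finset.sum_add_distrib, Finset.sum_sub_distrib, ← Finset.mul_sum,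
        Finset.sum_const, Finset.card_univ, Fintype.card_fin, nsmul_eq_mul, ← hS, ← hQ]
      field_simp
      ring
    rw [hexp] at hvar
    have h3 : (n:ℝ) * (S ^ 2 / n) = S ^ 2 := by field_simp
    have := mul_pos hm hvar
    nlinarith
  have hnum : ∑ i, (x i + E / (n : ℝ)) ^ 2 = Q + 2 * (E / n) * S + n * (E / n) ^ 2 := by
    have : ∀ k, (x k + E / n) ^ 2 = x k ^ 2 + 2 * (E / n) * x k + (E / n) ^ 2 := by
      intro k; ring
    simp only [this, Finset.sum_add_distrib, ← Finset.mul_sum,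
      Finset.sum_const, Finset.card_univ, Fintype.card_fin, nsmul_eq_mul, ← hS, ← hQ]
  rw [hnum, div_lt_div_iff₀ (by positivity) (by positivity)]
  have h1 : (n : ℝ) * (E / n) = E := by field_simp
  have h2 : (n : ℝ) * (E / n) ^ 2 = E ^ 2 / n := by field_simp
  rw [h2]
  have hQpos : 0 < Q := Finset.sum_pos (fun i _ => pow_pos (hpos i) 2) (by simp [Finset.univ_nonempty_iff, ← Fin.pos_iff_nonempty, hn])
  -- goal: (Q + 2*(E/n)*S + E^2/n) * S^2 < Q * (S+E)^2
  have hkey' : S ^ 2 / n < Q := by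
    rw [div_lt_iff₀ hm]; linarith
  have e1 : (2 * (E / n) * S) * S ^ 2 = 2 * E * S * (S ^ 2 / n) := by ring
  have e2 : (E ^ 2 / n) * S ^ 2 = E ^ 2 * (S ^ 2 / n) := by ring
  nlinarith [mul_lt_mul_of_pos_left hkey' (by positivity : (0:ℝ) < 2 * E * S),
    mul_lt_mul_of_pos_left hkey' (by positivity : (0:ℝ) < E ^ 2)]
end
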